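/- The infinite product ∏_{p prime} |1 − 8p²/((p−1)²(p²+1))| converges to a value greater than 1 (numerically 1.322…), while for any single odd prime p one has |1 − 8p²/((p−1)²(p²+1))| < 1. -/

import Mathlib

noncomputable def Estar (p : ℕ) : ℝ :=
  |1 - 8 * (p : ℝ) ^ 2 / (((p : ℝ) - 1) ^ 2 * ((p : ℝ) ^ 2 + 1))|

/-!
Write `Estar p = |1 - a p|` with `a p = 8p²/((p-1)²(p²+1)) ≈ 8/p²`. For `p ≥ 3` one has
`0 < a p < 2`, hence `Estar p < 1`. The factors for the primes below `37` are computed exactly; their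
product exceeds `35/27` (the factor `27/5` at `p = 2` dominates). For `p ≥ 37`,
`a p ≤ 8/(p-2) - 8/(p-1)`, which telescopes to a total of at most `8/35`, so by the Weierstrass
inequality `∏ (1 - a p) ≥ 1 - ∑ a p` the remaining factors multiply to at least `27/35`.
-/

open Filter Topology

section WeierstrassProduct

variable {ι : Type*}

theorem one_sub_sum_le_prod_one_sub {s : Finset ι} {f : ι → ℝ} (h0 : ∀ i ∈ s, 0 ≤ f i)
    (h1 : ∀ i ∈ s, f i ≤ 1) : 1 - ∑ i ∈ s, f i ≤ ∏ i ∈ s, (1 - f i) := by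
  classical
  induction s using Finset.induction_on with
  | empty => simp
  | insert i s hi ih =>
    rw [Finset.sum_insert hi, Finset.prod_insert hi]
    have ih := ih (fun j hj => h0 j (Finset.mem_insert_of_mem hj))
      (fun j hj => h1 j (Finset.mem_insert_of_mem hj))
    have hfi := h0 i (Finset.mem_insert_self i s)
    have hs : 0 ≤ ∑ j ∈ s, f j := Finset.sum_nonneg fun j hj => h0 j (Finset.mem_insert_of_mem hj)
    nlinarith [mul_le_mul_of_nonneg_left ih (sub_nonneg.2 (h1 i (Finset.mem_insert_self i s)))]

theorem Real.multipliable_one_sub_of_summable {f : ι → ℝ} (hf : Summable f) :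
    Multipliable fun i => 1 - f i := by
  simpa only [sub_eq_add_neg] using Real.multipliable_one_add_of_summable hf.neg

theorem one_sub_tsum_le_tprod_one_sub {f : ι → ℝ} (h0 : ∀ i, 0 ≤ f i) (h1 : ∀ i, f i ≤ 1)
    (hf : Summable f) : 1 - ∑' i, f i ≤ ∏' i, (1 - f i) := by
  refine ge_of_tendsto (Real.multipliable_one_sub_of_summable hf).hasProd
    (Eventually.of_forall fun s => ?_)
  calc 1 - ∑' i, f i ≤ 1 - ∑ i ∈ s, f i := by gcongr; exact hf.sum_le_tsum s fun i _ => h0 i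
    _ ≤ ∏ i ∈ s, (1 - f i) := one_sub_sum_le_prod_one_sub (fun i _ => h0 i) fun i _ => h1 i

end WeierstrassProduct

theorem summable_and_tsum_le_of_le_sub_succ {ι : Type*} {f : ι → ℝ} {g : ℕ → ℝ} {e : ι → ℕ}
    (he : Function.Injective e) (hf0 : ∀ i, 0 ≤ f i) (hfg : ∀ i, f i ≤ g (e i) - g (e i + 1))
    (hg : Antitone g) (hg0 : Tendsto g atTop (𝓝 0)) : Summable f ∧ ∑' i, f i ≤ g 0 := by
  have hd0 : ∀ n, 0 ≤ g n - g (n + 1) := fun n => sub_nonneg.2 (hg n.le_succ)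
  have hd : HasSum (fun n => g n - g (n + 1)) (g 0) := by
    rw [hasSum_iff_tendsto_nat_of_nonneg hd0]
    simp_rw [Finset.sum_range_sub']
    simpa using tendsto_const_nhds.sub hg0
  have hf : Summable f := (hd.summable.comp_injective he).of_nonneg_of_le hf0 hfg
  exact ⟨hf, hd.tsum_eq ▸ hf.tsum_le_tsum_of_inj e he (fun n _ => hd0 n) hfg hd.summable⟩

noncomputable def estarDefect (x : ℝ) : ℝ := 8 * x ^ 2 / ((x - 1) ^ 2 * (x ^ 2 + 1))

theorem Estar_eq_abs (p : ℕ) : Estar p = |1 - estarDefect p| := rfl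

section estarDefect

variable {x : ℝ}

theorem estarDefect_pos (hx : 1 < x) : 0 < estarDefect x := by
  have : 0 < x - 1 := sub_pos.2 hx
  unfold estarDefect
  positivity

theorem estarDefect_lt_two (hx : 3 ≤ x) : estarDefect x < 2 := by
  rw [estarDefect, div_lt_iff₀ (by nlinarith)]
  nlinarith [sq_nonneg (x - 3), sq_nonneg x]

theorem estarDefect_le_one (hx : 4 ≤ x) : estarDefect x ≤ 1 := by
  rw [estarDefect, div_le_one (by nlinarith)]
  nlinarith [sq_nonneg (x - 4), sq_nonneg x]

theorem estarDefect_le_sub (hx : 2 < x) : estarDefect x ≤ 8 / (x - 2) - 8 / (x - 1) := by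
  have h1 : 0 < x - 1 := by linarith
  have h2 : 0 < x - 2 := by linarith
  rw [div_sub_div _ _ h2.ne' h1.ne', estarDefect, div_le_div_iff₀ (by positivity) (by positivity)]
  nlinarith [sq_nonneg x]

end estarDefect

theorem Estar_lt_one {p : ℕ} (hp : 3 ≤ p) : Estar p < 1 := by
  have hx : (3 : ℝ) ≤ p := by exact_mod_cast hp
  rw [Estar_eq_abs, abs_sub_lt_iff]
  constructor <;> linarith [estarDefect_pos (by linarith : (1 : ℝ) < p), estarDefect_lt_two hx]

theorem Estar_eq_one_sub {p : ℕ} (hp : 4 ≤ p) : Estar p = 1 - estarDefect p := by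
  rw [Estar_eq_abs, abs_of_nonneg (sub_nonneg.2 (estarDefect_le_one (by exact_mod_cast hp)))]

theorem summable_and_tsum_estarDefect_le {ι : Type*} {e : ι → ℕ} (he : Function.Injective e)
    {N : ℕ} (hN : 3 ≤ N) (heN : ∀ i, N ≤ e i) :
    Summable (fun i => estarDefect (e i)) ∧ ∑' i, estarDefect (e i) ≤ 8 / (N - 2) := by
  have hN' : (3 : ℝ) ≤ N := by exact_mod_cast hN
  set g : ℕ → ℝ := fun n => 8 / ((n : ℝ) + N - 2)
  have hg : Antitone g := fun m n hmn => by
    have : (m : ℝ) ≤ n := by exact_mod_cast hmn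
    simp only [g]
    gcongr
    linarith [m.cast_nonneg (α := ℝ)]
  have hg0 : Tendsto g atTop (𝓝 0) :=
    tendsto_const_nhds.div_atTop <| tendsto_atTop_add_const_right _ _ <|
      tendsto_atTop_add_const_right _ _ tendsto_natCast_atTop_atTop
  have hinj : Function.Injective fun i => e i - N := fun i j hij => he <| by
    have := heN i; have := heN j; simp only at hij; omega
  have hpos : ∀ i, 0 ≤ estarDefect (e i) := fun i =>
    (estarDefect_pos (x := e i) (by exact_mod_cast (by have := heN i; omega : 1 < e i))).le
  have hle : ∀ i, estarDefect (e i) ≤ g (e i - N) - g (e i - N + 1) := fun i => by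
    have hi : (N : ℝ) ≤ e i := by exact_mod_cast heN i
    convert estarDefect_le_sub (x := e i) (by linarith) using 2 <;>
      simp only [g, Nat.cast_add, Nat.cast_sub (heN i)] <;> ring_nf
  obtain ⟨hs, hsum⟩ := summable_and_tsum_le_of_le_sub_succ hinj hpos hle hg hg0
  exact ⟨hs, by simpa [g] using hsum⟩

theorem exists_hasProd_Estar_primesBelow_mul {N : ℕ} (hN : 4 ≤ N) :
    ∃ t : ℝ, HasProd (fun p : Nat.Primes => Estar p) ((∏ p ∈ Nat.primesBelow N, Estar p) * t) ∧
      1 - 8 / (N - 2) ≤ t := by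
  set S : Finset Nat.Primes := (Nat.primesBelow N).subtype Nat.Prime
  have hS : ∀ q : Nat.Primes, q ∉ S ↔ N ≤ (q : ℕ) := fun q => by
    have hmem : q ∈ S ↔ (q : ℕ) ∈ Nat.primesBelow N := Finset.mem_subtype
    simp [hmem, Nat.mem_primesBelow, q.2]
  have hSprod : ∏ p ∈ S, Estar p = ∏ p ∈ Nat.primesBelow N, Estar p := by
    rw [← Finset.subtype_map_of_mem (p := Nat.Prime) fun p hp => (Nat.mem_primesBelow.1 hp).2,
      Finset.prod_map]
    rfl
  let e : ↑(↑S : Set Nat.Primes)ᶜ → ℕ := fun q => ((q : Nat.Primes) : ℕ)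
  have heN : ∀ q, 4 ≤ e q := fun q => hN.trans ((hS q).1 q.2)
  obtain ⟨hsum, hle⟩ := summable_and_tsum_estarDefect_le (e := e)
    (Nat.Primes.coe_nat_injective.comp Subtype.val_injective) (by omega) fun q => (hS q).1 q.2
  have h0 : ∀ q, 0 ≤ estarDefect (e q) := fun q =>
    (estarDefect_pos (by exact_mod_cast (by have := heN q; omega : 1 < e q))).le
  have h1 : ∀ q, estarDefect (e q) ≤ 1 := fun q => estarDefect_le_one (by exact_mod_cast heN q)
  have htail : HasProd (fun q => Estar (e q)) (∏' q, (1 - estarDefect (e q))) := by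
    convert (Real.multipliable_one_sub_of_summable hsum).hasProd using 2 with q
    exact Estar_eq_one_sub (heN q)
  refine ⟨_, hSprod ▸ (S.hasProd fun p : Nat.Primes => Estar p).mul_compl htail, ?_⟩
  linarith [one_sub_tsum_le_tprod_one_sub h0 h1 hsum]

theorem lt_prod_Estar_primesBelow_37 : (35 / 27 : ℝ) < ∏ p ∈ Nat.primesBelow 37, Estar p := by
  rw [show Nat.primesBelow 37 = {2, 3, 5, 7, 11, 13, 17, 19, 23, 29, 31} by decide]
  norm_num [Estar, abs_of_nonneg, abs_of_nonpos]

theorem stmt_19 :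
    Multipliable (fun p : Nat.Primes => Estar p) ∧
    1 < ∏' p : Nat.Primes, Estar p ∧
    ∀ p : ℕ, p.Prime → Odd p → Estar p < 1 := by
  obtain ⟨t, hprod, ht⟩ := exists_hasProd_Estar_primesBelow_mul (N := 37) (by norm_num)
  refine ⟨hprod.multipliable, ?_, fun p hp hodd => Estar_lt_one ?_⟩
  · rw [hprod.tprod_eq]
    norm_num at ht
    nlinarith [lt_prod_Estar_primesBelow_37]
  · have := Nat.odd_iff.1 hodd
    have := hp.two_le
    omega
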